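/- arXiv:2302.06119 — 2 statements merged into one kernel-verified Lean document; each statement's English description precedes it below -/
import Mathlib

section
/- (Equivalence of Vertex Profile) Let q' be a query labeled hypergraph whose vertex set equals the union of its hyperedges, let e_{q'} ∈ E(q') be a distinguished hyperedge, and let q'' be the hypergraph obtained from q' by removing e_{q'} (its vertex set being the union of the remaining hyperedges). Let g : E(q') → E(H) be an injective hyperedge assignment into a data labeled hypergraph H such that (a) the restriction of g to E(q'') is valid, i.e., realized by some embedding of q'' into H, and (b) |⋃_{e ∈ E(q')} e| = |⋃_{e ∈ E(q')} g(e)|. Write e_{m'} = g(e_{q'}). Then g is valid (i.e., realized by an embedding of q' into H with f(e) = g(e) for all e ∈ E(q')) if and only if the multiset { (l_q(u), {g(e) : e ∈ E(q'), u ∈ e}) : u ∈ e_{q'} } equals the multiset { (l_H(v), {g(e) : e ∈ E(q'), v ∈ g(e)}) : v ∈ e_{m'} }. -/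
/-- A hyperedge assignment `g` on a collection `Es` of query hyperedges (with query labels `lq`
and data labels `lH`) is *valid* if it is realized by some embedding of the hypergraph with
hyperedge set `Es` (whose vertex set is the union of its hyperedges) into the data hypergraph:
an injective, label-preserving vertex map `f` with `f(e) = g(e)` for every `e ∈ Es`. -/
def IsValidAssignment {α β L : Type*} [DecidableEq α] [DecidableEq β]
    (Es : Finset (Finset α)) (lq : α → L) (lH : β → L)
    (g : Finset α → Finset β) : Prop :=
  ∃ f : α → β, Set.InjOn f ↑(Es.biUnion id) ∧
    (∀ u ∈ Es.biUnion id, lH (f u) = lq u) ∧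
    (∀ e ∈ Es, e.image f = g e)

/-!
Profiles are taken relative to a family of hyperedges: a query vertex `u` carries its label and the
images `g e` of the hyperedges `e ∋ u`, a data vertex `v` its label and the hyperedges `g e ∋ v`.
For injective `g`, a profile-preserving bijection between the covered query and data vertices
realizes `g`, so `g` is valid exactly when the two multisets of profiles coincide.

Passing from `q''` to `q'` inserts `g(e_{q'})` into the profiles of the vertices of `e_{q'}` and of
`g(e_{q'})` and changes no other profile. Deleting `g(e_{q'})` from the hypothesis and discarding
the vertices whose profile becomes empty matches the vertices of `e_{q'}` covered by `q''` with
those of `g(e_{q'})` covered by `g(q'')`. Together with the matching of all profiles relative to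
`q''` given by its realization, counting yields equality of the full profile multisets.
-/

open Finset Function

namespace Finset

variable {α β γ : Type*}

theorem exists_bijOn_of_map_val_eq [Nonempty (α → β)] {S : Finset α} {T : Finset β}
    {p : α → γ} {P : β → γ} (h : S.val.map p = T.val.map P) :
    ∃ f : α → β, Set.BijOn f S T ∧ ∀ x ∈ S, P (f x) = p x := by
  classical
  induction S using Finset.cons_induction generalizing T with
  | empty =>
    have hT : T = ∅ := by simpa [eq_comm] using h
    exact ⟨Classical.arbitrary _, by simp [hT], by simp⟩
  | cons a S ha ih =>
    rw [cons_val, Multiset.map_cons] at h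
    obtain ⟨v, hv, hPv⟩ := Multiset.mem_map.mp (h ▸ Multiset.mem_cons_self _ _)
    have hT : T.val = v ::ₘ (T.erase v).val := by rw [erase_val, Multiset.cons_erase hv]
    rw [hT, Multiset.map_cons, hPv, Multiset.cons_inj_right] at h
    obtain ⟨f, hf, hfP⟩ := ih h
    have hfa : Set.EqOn f (update f a v) S := fun x hx =>
      (update_of_ne (ne_of_mem_of_not_mem hx ha) _ _).symm
    refine ⟨update f a v, ?_, ?_⟩
    · have := (hf.congr hfa).insert (a := a) (by simp)
      rwa [update_self, ← coe_insert v, insert_erase hv, ← coe_insert, ← cons_eq_insert _ _ ha]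
        at this
    · intro x hx
      rcases mem_cons.mp hx with rfl | hx
      · simpa using hPv
      · rw [← hfa hx]
        exact hfP x hx

theorem map_val_eq_of_bijOn {S : Finset α} {T : Finset β} {p : α → γ} {P : β → γ} {f : α → β}
    (hf : Set.BijOn f S T) (hfP : ∀ x ∈ S, P (f x) = p x) : S.val.map p = T.val.map P := by
  classical
  have hT : T = S.image f := coe_injective (by rw [coe_image, hf.image_eq])
  rw [hT, image_val_of_injOn hf.injOn, Multiset.map_map]
  exact Multiset.map_congr rfl fun x hx => (hfP x hx).symm

theorem map_val_filter_add_filter_not (s : Finset α) (p : α → Prop) [DecidablePred p]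
    (φ : α → γ) : (s.filter p).val.map φ + (s.filter (¬ p ·)).val.map φ = s.val.map φ := by
  rw [filter_val, filter_val, ← Multiset.map_add, Multiset.filter_add_not]

end Finset

section VertexProfile

variable {α β γ L : Type*} [DecidableEq β] [DecidableEq γ]
  {Es : Finset (Finset α)} {g : Finset α → Finset β} {c : Finset α → Finset γ} {l : γ → L}

/-- With `c = id` this is the profile of a query vertex, with `c = g` that of a data vertex. -/
def vertexProfile (Es : Finset (Finset α)) (g : Finset α → Finset β) (c : Finset α → Finset γ)
    (l : γ → L) (x : γ) : L × Finset (Finset β) :=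
  (l x, {e ∈ Es | x ∈ c e}.image g)

theorem mem_vertexProfile_snd_iff (hg : Set.InjOn g Es) {e : Finset α} (he : e ∈ Es) {x : γ} :
    g e ∈ (vertexProfile Es g c l x).2 ↔ x ∈ c e := by
  change g e ∈ {e ∈ Es | x ∈ c e}.image g ↔ _
  rw [← mem_coe, coe_image, hg.mem_image_iff (coe_subset.2 (filter_subset _ _)) he]
  simp [he]

theorem vertexProfile_snd_nonempty_iff {x : γ} :
    (vertexProfile Es g c l x).2.Nonempty ↔ x ∈ Es.biUnion c := by
  simp [vertexProfile, filter_nonempty_iff]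

variable [DecidableEq α]

theorem vertexProfile_erase_of_notMem {e₀ : Finset α} {x : γ} (hx : x ∉ c e₀) :
    vertexProfile (Es.erase e₀) g c l x = vertexProfile Es g c l x := by
  rw [vertexProfile, filter_erase, erase_eq_of_notMem (by simp [hx])]
  rfl

theorem vertexProfile_erase_of_mem (hg : Set.InjOn g Es) {e₀ : Finset α} (he₀ : e₀ ∈ Es) {x : γ}
    (hx : x ∈ c e₀) :
    vertexProfile (Es.erase e₀) g c l x =
      Prod.map id (·.erase (g e₀)) (vertexProfile Es g c l x) := by
  have hnot : g e₀ ∉ {e ∈ Es.erase e₀ | x ∈ c e}.image g := by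
    have hsub : {e ∈ Es.erase e₀ | x ∈ c e} ⊆ Es := (filter_subset _ _).trans (erase_subset _ _)
    rw [← mem_coe, coe_image, hg.mem_image_iff (coe_subset.2 hsub) he₀]
    simp
  have hsplit : {e ∈ Es | x ∈ c e} = insert e₀ {e ∈ Es.erase e₀ | x ∈ c e} := by
    rw [filter_erase, insert_erase (by simp [he₀, hx])]
  simp only [vertexProfile, hsplit, image_insert, Prod.map_apply, id, erase_insert hnot]

theorem map_vertexProfile_add_map_filter {e₀ : Finset α} (he₀ : e₀ ∈ Es) :
    (Es.biUnion c).val.map (vertexProfile Es g c l) +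
        ((c e₀).filter (· ∈ (Es.erase e₀).biUnion c)).val.map (vertexProfile (Es.erase e₀) g c l) =
      (c e₀).val.map (vertexProfile Es g c l) +
        ((Es.erase e₀).biUnion c).val.map (vertexProfile (Es.erase e₀) g c l) := by
  set V'' := (Es.erase e₀).biUnion c
  have hV : Es.biUnion c = c e₀ ∪ V'' := by
    rw [← Finset.biUnion_insert, insert_erase he₀]
  have hin : (Es.biUnion c).filter (· ∈ c e₀) = c e₀ := by
    rw [filter_mem_eq_inter, Finset.inter_eq_right.2 (subset_biUnion_of_mem c he₀)]
  have hout : (Es.biUnion c).filter (· ∉ c e₀) = V''.filter (· ∉ c e₀) := by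
    ext x
    simp only [hV, mem_filter, Finset.mem_union]
    tauto
  have hcomm : V''.filter (· ∈ c e₀) = (c e₀).filter (· ∈ V'') := by
    ext x
    simp only [mem_filter, and_comm]
  have hΦ : (V''.filter (· ∉ c e₀)).val.map (vertexProfile Es g c l) =
      (V''.filter (· ∉ c e₀)).val.map (vertexProfile (Es.erase e₀) g c l) :=
    Multiset.map_congr rfl fun x hx => (vertexProfile_erase_of_notMem (mem_filter.1 hx).2).symm
  rw [← map_val_filter_add_filter_not (Es.biUnion c) (· ∈ c e₀),
    ← map_val_filter_add_filter_not V'' (· ∈ c e₀), hin, hout, hcomm, hΦ]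
  abel

theorem map_filter_vertexProfile_erase (hg : Set.InjOn g Es) {e₀ : Finset α} (he₀ : e₀ ∈ Es) :
    ((c e₀).filter (· ∈ (Es.erase e₀).biUnion c)).val.map (vertexProfile (Es.erase e₀) g c l) =
      (((c e₀).val.map (vertexProfile Es g c l)).map
        (Prod.map id (·.erase (g e₀)))).filter (·.2.Nonempty) := by
  have hF : ∀ x ∈ c e₀, vertexProfile (Es.erase e₀) g c l x =
      Prod.map id (·.erase (g e₀)) (vertexProfile Es g c l x) :=
    fun x hx => vertexProfile_erase_of_mem hg he₀ hx
  rw [Multiset.map_map, Multiset.filter_map, filter_val]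
  have hfilter : (c e₀).val.filter (· ∈ (Es.erase e₀).biUnion c) =
      (c e₀).val.filter
        ((·.2.Nonempty) ∘ Prod.map id (·.erase (g e₀)) ∘ vertexProfile Es g c l) :=
    Multiset.filter_congr fun x hx => by
      simp only [comp_apply, ← hF x hx, vertexProfile_snd_nonempty_iff]
  rw [hfilter]
  exact Multiset.map_congr rfl fun x hx => hF x (Multiset.mem_of_mem_filter hx)

end VertexProfile

section Validity

variable {α β L : Type*} [DecidableEq α] [DecidableEq β]
  {Es : Finset (Finset α)} {lq : α → L} {lH : β → L} {g : Finset α → Finset β}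

theorem vertexProfile_apply_eq_of_image_eq {f : α → β} (hf : Set.InjOn f ↑(Es.biUnion id))
    (hl : ∀ u ∈ Es.biUnion id, lH (f u) = lq u) (himg : ∀ e ∈ Es, e.image f = g e)
    {u : α} (hu : u ∈ Es.biUnion id) :
    vertexProfile Es g g lH (f u) = vertexProfile Es g id lq u := by
  have hmem : ∀ e ∈ Es, f u ∈ g e ↔ u ∈ id e := fun e he => by
    rw [← himg e he, ← mem_coe, coe_image]
    exact hf.mem_image_iff (coe_subset.2 (subset_biUnion_of_mem id he)) hu
  rw [vertexProfile, vertexProfile, hl u hu, filter_congr hmem]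

theorem IsValidAssignment.map_vertexProfile_eq (hv : IsValidAssignment Es lq lH g)
    {s : Finset (Finset α)} (hs : s ⊆ Es) :
    (s.biUnion id).val.map (vertexProfile Es g id lq) =
      (s.biUnion g).val.map (vertexProfile Es g g lH) := by
  obtain ⟨f, hf, hl, himg⟩ := hv
  have hsub : s.biUnion id ⊆ Es.biUnion id := biUnion_subset_biUnion_of_subset_left _ hs
  have hW : s.biUnion g = (s.biUnion id).image f := by
    rw [Finset.biUnion_image]
    exact biUnion_congr rfl fun e he => (himg e (hs he)).symm
  refine map_val_eq_of_bijOn ?_ fun u hu => vertexProfile_apply_eq_of_image_eq hf hl himg (hsub hu)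
  rw [hW, coe_image]
  exact (hf.mono (coe_subset.2 hsub)).bijOn_image

theorem isValidAssignment_of_bijOn (hg : Set.InjOn g Es) {f : α → β}
    (hf : Set.BijOn f ↑(Es.biUnion id) ↑(Es.biUnion g))
    (hfΦ : ∀ u ∈ Es.biUnion id, vertexProfile Es g g lH (f u) = vertexProfile Es g id lq u) :
    IsValidAssignment Es lq lH g := by
  refine ⟨f, hf.injOn, fun u hu => congrArg Prod.fst (hfΦ u hu), fun e he => ?_⟩
  have hmem : ∀ u ∈ Es.biUnion id, f u ∈ g e ↔ u ∈ e := fun u hu => by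
    rw [← mem_vertexProfile_snd_iff hg he (c := g) (l := lH), hfΦ u hu,
      mem_vertexProfile_snd_iff hg he]
    rfl
  ext v
  constructor
  · intro hv
    obtain ⟨u, hu, rfl⟩ := mem_image.1 hv
    exact (hmem u (mem_biUnion.2 ⟨e, he, hu⟩)).2 hu
  · intro hv
    obtain ⟨u, hu, rfl⟩ := hf.surjOn (mem_biUnion.2 ⟨e, he, hv⟩)
    exact mem_image_of_mem f ((hmem u hu).1 hv)

theorem isValidAssignment_iff_map_vertexProfile_eq [Nonempty (α → β)] (hg : Set.InjOn g Es) :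
    IsValidAssignment Es lq lH g ↔
      (Es.biUnion id).val.map (vertexProfile Es g id lq) =
        (Es.biUnion g).val.map (vertexProfile Es g g lH) :=
  ⟨fun hv => hv.map_vertexProfile_eq subset_rfl, fun h =>
    let ⟨_, hf, hfΦ⟩ := exists_bijOn_of_map_val_eq h
    isValidAssignment_of_bijOn hg hf hfΦ⟩

theorem map_vertexProfile_eq_of_erase {e₀ : Finset α} (he₀ : e₀ ∈ Es) (hg : Set.InjOn g Es)
    (h'' : ((Es.erase e₀).biUnion id).val.map (vertexProfile (Es.erase e₀) g id lq) =
      ((Es.erase e₀).biUnion g).val.map (vertexProfile (Es.erase e₀) g g lH))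
    (h₀ : e₀.val.map (vertexProfile Es g id lq) = (g e₀).val.map (vertexProfile Es g g lH)) :
    (Es.biUnion id).val.map (vertexProfile Es g id lq) =
      (Es.biUnion g).val.map (vertexProfile Es g g lH) := by
  have hcommon := (map_filter_vertexProfile_erase (c := id) (l := lq) hg he₀).trans
    ((congrArg (fun m => (m.map (Prod.map id (·.erase (g e₀)))).filter (·.2.Nonempty)) h₀).trans
      (map_filter_vertexProfile_erase (c := g) (l := lH) hg he₀).symm)
  have hcount := (map_vertexProfile_add_map_filter (c := id) (l := lq) (g := g) he₀).trans
    ((congrArg₂ (· + ·) h₀ h'').trans (map_vertexProfile_add_map_filter (c := g) he₀).symm)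
  rw [← hcommon] at hcount
  exact add_right_cancel hcount

end Validity

theorem vertex_profile_equivalence_general
    {α β L : Type*} [DecidableEq α] [DecidableEq β]
    (Eq' : Finset (Finset α)) (lq : α → L)
    (lH : β → L)
    (e_q : Finset α) (heq : e_q ∈ Eq')
    (g : Finset α → Finset β)
    (hginj : Set.InjOn g ↑Eq')
    (hvalid'' : IsValidAssignment (Eq'.erase e_q) lq lH g) :
    IsValidAssignment Eq' lq lH g ↔
      e_q.val.map (fun u => ((lq u : L), (Eq'.filter (fun e => u ∈ e)).image g))
        = (g e_q).val.map (fun v => ((lH v : L),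
            (Eq'.filter (fun e => v ∈ g e)).image g)) := by
  have : Nonempty (α → β) := ⟨hvalid''.choose⟩
  change _ ↔ e_q.val.map (vertexProfile Eq' g id lq) = (g e_q).val.map (vertexProfile Eq' g g lH)
  constructor
  · intro hv
    simpa using hv.map_vertexProfile_eq (singleton_subset_iff.2 heq)
  · intro h₀
    exact (isValidAssignment_iff_map_vertexProfile_eq hginj).2
      (map_vertexProfile_eq_of_erase heq hginj (hvalid''.map_vertexProfile_eq subset_rfl) h₀)

/-- **Equivalence of Vertex Profile.**
Let `q'` be a query labeled hypergraph with hyperedges `Eq'` (its vertex set being the union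
of its hyperedges) and distinguished hyperedge `e_q ∈ Eq'`, and let `q''` be obtained from `q'`
by removing `e_q`. Let `g` be an injective hyperedge assignment into the data hypergraph `H`
such that (a) the restriction of `g` to `q''` is valid and (b) the number of vertices covered
by the query hyperedges equals the number of vertices covered by their images. Then `g` is
valid if and only if the multiset of vertex profiles of the vertices of `e_q` equals the
multiset of vertex profiles of the vertices of `e_{m'} = g(e_q)`. -/
theorem vertex_profile_equivalence
    {α β L : Type*} [DecidableEq α] [DecidableEq β]
    (Eq' : Finset (Finset α)) (lq : α → L)
    (EH : Finset (Finset β)) (lH : β → L)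
    (hq_nonempty : ∀ e ∈ Eq', e.Nonempty)
    (hH_nonempty : ∀ e ∈ EH, e.Nonempty)
    (e_q : Finset α) (heq : e_q ∈ Eq')
    (g : Finset α → Finset β)
    (hgE : ∀ e ∈ Eq', g e ∈ EH)
    (hginj : Set.InjOn g ↑Eq')
    (hvalid'' : IsValidAssignment (Eq'.erase e_q) lq lH g)
    (hcard : (Eq'.biUnion id).card = (Eq'.biUnion (fun e => g e)).card) :
    IsValidAssignment Eq' lq lH g ↔
      e_q.val.map (fun u => ((lq u : L), (Eq'.filter (fun e => u ∈ e)).image g))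
        = (g e_q).val.map (fun v => ((lH v : L),
            (Eq'.filter (fun e => v ∈ g e)).image g)) :=
  vertex_profile_equivalence_general Eq' lq lH e_q heq g hginj hvalid''
end

section
/- (Completeness of candidate generation) Let f be an embedding of a query labeled hypergraph q into a data labeled hypergraph H, let φ be a matching order (a permutation of E(q)), let e_q = φ[i] be the hyperedge currently being matched, and let q' be the partial query consisting of the hyperedges φ[1..i]. Then the candidate c = f(e_q) satisfies all of the following filter conditions: (i) S(c) = S(e_q), i.e., the multiset of labels of the vertices of c equals the multiset of labels of the vertices of e_q; (ii) c contains no vertex of V_{n_incdt} = ⋃ { f(e) : e ∈ E(q), e matched before e_q in φ, e ∩ e_q = ∅ }; and (iii) for every hyperedge e matched before e_q in φ with e ∩ e_q ≠ ∅ and every u ∈ e ∩ e_q, there exists a vertex v ∈ f(e) with v ∈ c, v ∉ V_{n_incdt}, l_H(v) = l_q(u), and the degree of v in the hypergraph with hyperedge set { f(e') : e' ∈ E(q'), e' matched up to step i } equals the degree of u in q'. Consequently c belongs to the candidate set C(e_q) computed as the intersection, over all such pairs (e, u), of the unions ⋃_{v ∈ V_incdt(u)} he(v, S(e_q)), where V_incdt(u)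 is the set of vertices of f(e) not in V_{n_incdt} whose label equals l_q(u) and whose degree in the matched hypergraph equals the degree of u in q', and he(v, s) is the set of hyperedges of H incident to v with signature s. -/
/-!
An embedding `f` is injective on `V(q)` and every query hyperedge lies in `V(q)`, so on query
hyperedges `e ↦ f(e)` is injective and `f u ∈ f(e) ↔ u ∈ e`. Hence `f` preserves signatures,
disjointness of hyperedges and vertex degrees in the matched partial hypergraph, and `f u` for
`u ∈ e ∩ e_q` is the required witness in `V_incdt(e, u)`.
-/

open Finset

namespace Finset

variable {α β L : Type*} [DecidableEq β] {f : α → β} {V : Finset α}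

theorem mem_image_iff_of_injOn (hf : Set.InjOn f V) {s : Finset α} (hs : s ⊆ V) {x : α}
    (hx : x ∈ V) : f x ∈ s.image f ↔ x ∈ s := by
  rw [← mem_coe, coe_image]
  exact hf.mem_image_iff (coe_subset.mpr hs) hx

theorem disjoint_image_of_injOn [DecidableEq α] (hf : Set.InjOn f V) {s t : Finset α}
    (hs : s ⊆ V) (ht : t ⊆ V) (hst : s ∩ t = ∅) : Disjoint (s.image f) (t.image f) := by
  have hst_inj : Set.InjOn f (↑s ∪ ↑t) :=
    hf.mono (coe_union s t ▸ coe_subset.mpr (union_subset hs ht))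
  rw [disjoint_iff_inter_eq_empty, ← image_inter_of_injOn s t hst_inj, hst, image_empty]

theorem map_val_image_eq_of_injOn {lq : α → L} {lH : β → L} {s : Finset α}
    (hf : Set.InjOn f s) (hl : ∀ u ∈ s, lH (f u) = lq u) :
    (s.image f).val.map lH = s.val.map lq := by
  rw [image_val_of_injOn hf, Multiset.map_map]
  exact Multiset.map_congr rfl hl

theorem card_filter_mem_image_image_of_injOn [DecidableEq α] (hf : Set.InjOn f V)
    {Q : Finset (Finset α)} (hQ : ∀ e ∈ Q, e ⊆ V) {u : α} (hu : u ∈ V) :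
    #((Q.image (·.image f)).filter (f u ∈ ·)) = #(Q.filter (u ∈ ·)) := by
  rw [filter_image, filter_congr fun e he => mem_image_iff_of_injOn hf (hQ e he) hu]
  exact card_image_of_injOn <| (image_injOn_powerset_of_injOn hf).mono fun e he =>
    mem_powerset.mpr (hQ e (mem_filter.mp he).1)

end Finset

theorem candidate_generation_complete_general
    {α β L : Type*} [DecidableEq α] [DecidableEq β] [DecidableEq L]
    (Vq : Finset α) (Eq' : Finset (Finset α)) (lq : α → L)
    (EH : Finset (Finset β)) (lH : β → L)
    (f : α → β)
    (hinj : Set.InjOn f ↑Vq)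
    (hlabel : ∀ u ∈ Vq, lH (f u) = lq u)
    (hedge_sub : ∀ e ∈ Eq', e ⊆ Vq)
    (hedge : ∀ e ∈ Eq', e.image f ∈ EH)
    (φ : List (Finset α)) (hperm : φ.Perm Eq'.toList)
    (i : ℕ) (hi : i < φ.length)
    (e_q : Finset α) (he_q : e_q = φ.get ⟨i, hi⟩) :
    -- previously matched query hyperedges
    let prev : Finset (Finset α) := (φ.take i).toFinset
    -- the partial query `q'`: hyperedges matched up to and including step `i`
    let Q' : Finset (Finset α) := (φ.take (i + 1)).toFinset
    -- vertices of the partial embedding that are definitely non-incident to `f(e_q)`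
    let Vn : Finset β :=
      (prev.filter (fun e => e ∩ e_q = ∅)).biUnion (fun e => e.image f)
    -- hyperedges of the matched partial hypergraph
    let M : Finset (Finset β) := Q'.image (fun e => e.image f)
    -- degree of a data vertex in the matched partial hypergraph
    let degM : β → ℕ := fun v => (M.filter (fun s => v ∈ s)).card
    -- degree of a query vertex in the partial query `q'`
    let degQ : α → ℕ := fun u => (Q'.filter (fun e => u ∈ e)).card
    -- the candidate
    let c : Finset β := e_q.image f
    -- hyperedges of `H` incident to `v` with signature `S(e_q)`
    let he : β → Finset (Finset β) :=
      fun v => EH.filter (fun d => v ∈ d ∧ d.val.map lH = e_q.val.map lq)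
    -- the per-vertex candidate vertex sets `V_incdt(e, u)`
    let Vinc : Finset α → α → Finset β := fun e u =>
      (e.image f).filter (fun v => v ∉ Vn ∧ lH v = lq u ∧ degM v = degQ u)
    -- (i) same signature
    (c.val.map lH = e_q.val.map lq) ∧
    -- (ii) no vertex of `V_{n_incdt}`
    (∀ v ∈ c, v ∉ Vn) ∧
    -- (iii) witnesses for every previously matched adjacent hyperedge
    (∀ e ∈ prev, (e ∩ e_q).Nonempty → ∀ u ∈ e ∩ e_q,
      ∃ v ∈ e.image f, v ∈ c ∧ v ∉ Vn ∧ lH v = lq u ∧ degM v = degQ u) ∧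
    -- (iv) membership in the computed candidate set `C(e_q)`
    (∀ e ∈ prev, ∀ u ∈ e ∩ e_q, c ∈ (Vinc e u).biUnion he) := by
  intro prev Q' Vn M degM degQ c he Vinc
  have hφ : ∀ e ∈ φ, e ∈ Eq' := fun e hmem => mem_toList.mp (hperm.mem_iff.mp hmem)
  have hprefix : ∀ n, ∀ e ∈ (φ.take n).toFinset, e ⊆ Vq := fun n e hmem =>
    hedge_sub e (hφ e (List.mem_of_mem_take (List.mem_toFinset.mp hmem)))
  have heq_mem : e_q ∈ Eq' := he_q ▸ hφ _ (φ.get_mem ⟨i, hi⟩)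
  have heq_sub : e_q ⊆ Vq := hedge_sub e_q heq_mem
  have hsig : c.val.map lH = e_q.val.map lq :=
    map_val_image_eq_of_injOn (hinj.mono (coe_subset.mpr heq_sub)) fun u hu =>
      hlabel u (heq_sub hu)
  have hVn : ∀ v ∈ c, v ∉ Vn := by
    intro v hv hvVn
    obtain ⟨e, hmem, hve⟩ := mem_biUnion.mp hvVn
    obtain ⟨hprev, hdisj⟩ := mem_filter.mp hmem
    exact disjoint_left.mp (disjoint_image_of_injOn hinj (hprefix i e hprev) heq_sub hdisj) hve hv
  have hwitness : ∀ e ∈ prev, ∀ u ∈ e ∩ e_q, f u ∈ Vinc e u := by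
    intro e _ u hu
    obtain ⟨hue, hueq⟩ := mem_inter.mp hu
    exact mem_filter.mpr ⟨mem_image_of_mem f hue, hVn _ (mem_image_of_mem f hueq),
      hlabel u (heq_sub hueq),
      card_filter_mem_image_image_of_injOn hinj (hprefix (i + 1)) (heq_sub hueq)⟩
  refine ⟨hsig, hVn, fun e hprev _ u hu => ?_, fun e hprev u hu => ?_⟩
  · obtain ⟨hfe, hfu⟩ := mem_filter.mp (hwitness e hprev u hu)
    exact ⟨f u, hfe, mem_image_of_mem f (mem_inter.mp hu).2, hfu⟩
  · exact mem_biUnion.mpr ⟨f u, hwitness e hprev u hu,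
      mem_filter.mpr ⟨hedge e_q heq_mem, mem_image_of_mem f (mem_inter.mp hu).2, hsig⟩⟩

/-- **Completeness of candidate generation.**
Let `f` be an embedding of a query labeled hypergraph `q` into a data labeled hypergraph `H`,
let `φ` be a matching order (a permutation of `E(q)`), let `e_q = φ[i]` be the hyperedge
currently being matched, and let the partial query `q'` consist of the hyperedges up to and
including `e_q`. Then the candidate `c = f(e_q)`:
(i) has the same signature as `e_q`;
(ii) contains no vertex of `V_{n_incdt}` (images of previously matched hyperedges disjoint
from `e_q`);
(iii) for every previously matched hyperedge `e` adjacent to `e_q` and every `u ∈ e ∩ e_q`,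
there is `v ∈ f(e)` with `v ∈ c`, `v ∉ V_{n_incdt}`, matching label, and matching degree in
the matched partial hypergraph; and consequently
(iv) `c` lies in every set `⋃_{v ∈ V_incdt(e,u)} he(v, S(e_q))`, i.e. `c` is in the computed
candidate set `C(e_q)`. -/
theorem candidate_generation_complete
    {α β L : Type*} [DecidableEq α] [DecidableEq β] [DecidableEq L]
    (Vq : Finset α) (Eq' : Finset (Finset α)) (lq : α → L)
    (VH : Finset β) (EH : Finset (Finset β)) (lH : β → L)
    (f : α → β)
    (hinj : Set.InjOn f ↑Vq)
    (hmap : ∀ u ∈ Vq, f u ∈ VH)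
    (hlabel : ∀ u ∈ Vq, lH (f u) = lq u)
    (hedge_sub : ∀ e ∈ Eq', e ⊆ Vq)
    (hedge : ∀ e ∈ Eq', e.image f ∈ EH)
    (φ : List (Finset α)) (hperm : φ.Perm Eq'.toList)
    (i : ℕ) (hi : i < φ.length)
    (e_q : Finset α) (he_q : e_q = φ.get ⟨i, hi⟩) :
    -- previously matched query hyperedges
    let prev : Finset (Finset α) := (φ.take i).toFinset
    -- the partial query `q'`: hyperedges matched up to and including step `i`
    let Q' : Finset (Finset α) := (φ.take (i + 1)).toFinset
    -- vertices of the partial embedding that are definitely non-incident to `f(e_q)`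
    let Vn : Finset β :=
      (prev.filter (fun e => e ∩ e_q = ∅)).biUnion (fun e => e.image f)
    -- hyperedges of the matched partial hypergraph
    let M : Finset (Finset β) := Q'.image (fun e => e.image f)
    -- degree of a data vertex in the matched partial hypergraph
    let degM : β → ℕ := fun v => (M.filter (fun s => v ∈ s)).card
    -- degree of a query vertex in the partial query `q'`
    let degQ : α → ℕ := fun u => (Q'.filter (fun e => u ∈ e)).card
    -- the candidate
    let c : Finset β := e_q.image f
    -- hyperedges of `H` incident to `v` with signature `S(e_q)`
    let he : β → Finset (Finset β) :=
      fun v => EH.filter (fun d => v ∈ d ∧ d.val.map lH = e_q.val.map lq)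
    -- the per-vertex candidate vertex sets `V_incdt(e, u)`
    let Vinc : Finset α → α → Finset β := fun e u =>
      (e.image f).filter (fun v => v ∉ Vn ∧ lH v = lq u ∧ degM v = degQ u)
    -- (i) same signature
    (c.val.map lH = e_q.val.map lq) ∧
    -- (ii) no vertex of `V_{n_incdt}`
    (∀ v ∈ c, v ∉ Vn) ∧
    -- (iii) witnesses for every previously matched adjacent hyperedge
    (∀ e ∈ prev, (e ∩ e_q).Nonempty → ∀ u ∈ e ∩ e_q,
      ∃ v ∈ e.image f, v ∈ c ∧ v ∉ Vn ∧ lH v = lq u ∧ degM v = degQ u) ∧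
    -- (iv) membership in the computed candidate set `C(e_q)`
    (∀ e ∈ prev, ∀ u ∈ e ∩ e_q, c ∈ (Vinc e u).biUnion he) :=
  candidate_generation_complete_general Vq Eq' lq EH lH f hinj hlabel hedge_sub hedge φ hperm i hi
    e_q he_q
end
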